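/- arXiv:2210.06248 — 2 statements merged into one kernel-verified Lean document; each statement's English description precedes it below -/
import Mathlib

section
/- Let Γ_□ = ℤe₁ ⊕ ℤ(σe₂) be a rectangular lattice with σ² ∈ ℚ, σ > 0. For any nonzero c = p·e₁ + q·(σe₂) with p, q ∈ ℤ, the reflection φ_c is a coincidence isometry of Γ_□. -/
noncomputable section
open scoped InnerProductSpace

abbrev E2 := EuclideanSpace ℝ (Fin 2)

def e1 : E2 := EuclideanSpace.single 0 1
def e2 : E2 := EuclideanSpace.single 1 1

/-- The ℤ-span of a set of vectors, as an additive subgroup of ℝ². -/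
def latt (s : Set E2) : AddSubgroup E2 := (Submodule.span ℤ s).toAddSubgroup

/-- Image lattice of `Γ` under a linear map. -/
def imageLat (f : E2 →ₗ[ℝ] E2) (Γ : AddSubgroup E2) : AddSubgroup E2 :=
  Γ.map f.toAddMonoidHom

/-- `f` is a coincidence transformation of `Γ`: `Γ ∩ fΓ` has finite index in `Γ`. -/
def CI (Γ : AddSubgroup E2) (f : E2 →ₗ[ℝ] E2) : Prop :=
  (Γ ⊓ imageLat f Γ).relIndex Γ ≠ 0

/-- Counterclockwise rotation of ℝ² by angle `θ`. -/
def rot (θ : ℝ) : E2 →ₗ[ℝ] E2 :=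
  Matrix.toEuclideanLin !![Real.cos θ, -Real.sin θ; Real.sin θ, Real.cos θ]

/-- Reflection in the line through the origin orthogonal to `c`:
`x ↦ x - 2 (⟪x,c⟫ / ‖c‖²) • c`. -/
def reflc (c : E2) : E2 →ₗ[ℝ] E2 :=
  LinearMap.id - (2 / ‖c‖ ^ 2) • ((innerSL ℝ c : E2 →ₗ[ℝ] ℝ).smulRight c)

/-!
Write `σ² = r` with `r ∈ ℚ` of denominator `b`. Since `c` lies in `Γ = ℤe₁ ⊕ ℤσe₂` and
`⟪a e₁ + a' σe₂, m e₁ + m' σe₂⟫ = a m + a' m' σ²`, the number `b⟪c, x⟫` is an integer for every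
`x ∈ Γ`; in particular so is `n = b‖c‖² ≠ 0`. Hence `n φ_c(x) = n x - 2 b⟪c, x⟫ c ∈ Γ`, and as
`φ_c` is an involution, `nΓ ⊆ Γ ∩ φ_c Γ`. A subgroup containing `nΓ` has finite index in the
finitely generated group `Γ`, because the quotient is finitely generated and killed by `n`.
-/

namespace AddSubgroup

theorem relIndex_ne_zero_of_zsmul_mem {G : Type*} [AddCommGroup G] {H K : AddSubgroup G}
    (hH : H.FG) {n : ℤ} (hn : n ≠ 0) (h : ∀ x ∈ H, n • x ∈ K) : K.relIndex H ≠ 0 := by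
  have : AddGroup.FG H := AddGroup.fg_iff_addSubgroup_fg H |>.mpr hH
  have htors : IsAddTorsion (H ⧸ K.addSubgroupOf H) := by
    intro g
    induction g using QuotientAddGroup.induction_on with | H x => ?_
    refine isOfFinAddOrder_iff_zsmul_eq_zero.mpr ⟨n, hn, ?_⟩
    rw [← QuotientAddGroup.mk_zsmul, QuotientAddGroup.eq_zero_iff]
    exact h x x.2
  have := AddCommGroup.finite_of_fg_isAddTorsion _ htors
  exact index_ne_zero_of_finite

end AddSubgroup

theorem latt_fg {s : Set E2} (hs : s.Finite) : (latt s).FG :=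
  (Submodule.fg_iff_addSubgroup_fg _).mp (Submodule.fg_span hs)

theorem mem_latt_pair {v w x : E2} : x ∈ latt {v, w} ↔ ∃ a b : ℤ, a • v + b • w = x :=
  Submodule.mem_span_pair

theorem ci_of_involutive_of_zsmul_mem {Γ : AddSubgroup E2} (hΓ : Γ.FG) {f : E2 →ₗ[ℝ] E2}
    (hf : Function.Involutive f) {n : ℤ} (hn : n ≠ 0) (h : ∀ x ∈ Γ, n • f x ∈ Γ) : CI Γ f := by
  refine AddSubgroup.relIndex_ne_zero_of_zsmul_mem hΓ hn fun x hx => ⟨Γ.zsmul_mem hx n, ?_⟩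
  exact ⟨n • f x, h x hx, by simp [map_zsmul, hf x]⟩

theorem reflc_apply (c x : E2) : reflc c x = x - (2 / ‖c‖ ^ 2 * ⟪c, x⟫_ℝ) • c := by
  simp [reflc, smul_smul]

theorem reflc_involutive {c : E2} (hc : c ≠ 0) : Function.Involutive (reflc c) := by
  intro x
  have hc' : ‖c‖ ≠ 0 := norm_ne_zero_iff.mpr hc
  simp only [reflc_apply, inner_sub_right, real_inner_smul_right, real_inner_self_eq_norm_sq]
  have key : 2 / ‖c‖ ^ 2 * (⟪c, x⟫_ℝ - 2 / ‖c‖ ^ 2 * ⟪c, x⟫_ℝ * ‖c‖ ^ 2)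
      = -(2 / ‖c‖ ^ 2 * ⟪c, x⟫_ℝ) := by
    field_simp
    ring
  rw [key]
  module

theorem zsmul_reflc_mem {Γ : AddSubgroup E2} {c : E2} (hcΓ : c ∈ Γ) (hc : c ≠ 0) {b n : ℤ}
    (hint : ∀ x ∈ Γ, ∃ k : ℤ, b * ⟪c, x⟫_ℝ = k) (hn : b * ‖c‖ ^ 2 = n) {x : E2} (hx : x ∈ Γ) :
    n • reflc c x ∈ Γ := by
  obtain ⟨k, hk⟩ := hint x hx
  have hc2 : ‖c‖ ^ 2 ≠ 0 := by positivity
  have : n • reflc c x = n • x - (2 * k) • c := by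
    simp only [reflc_apply, ← Int.cast_smul_eq_zsmul ℝ, ← hn, Int.cast_mul, Int.cast_ofNat, ← hk]
    rw [smul_sub, smul_smul]
    congr 2
    field_simp
  rw [this]
  exact Γ.sub_mem (Γ.zsmul_mem hx n) (Γ.zsmul_mem hcΓ _)

theorem inner_zsmul_e1_add_zsmul_smul_e2 (σ : ℝ) (a b a' b' : ℤ) :
    ⟪a • e1 + b • (σ • e2), a' • e1 + b' • (σ • e2)⟫_ℝ = a * a' + b * b' * σ ^ 2 := by
  have h11 : ⟪e1, e1⟫_ℝ = 1 := by simp [e1]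
  have h22 : ⟪e2, e2⟫_ℝ = 1 := by simp [e2]
  have h12 : ⟪e1, e2⟫_ℝ = 0 := by simp [e1, e2, EuclideanSpace.inner_single_left]
  have h21 : ⟪e2, e1⟫_ℝ = 0 := by simp [e1, e2, EuclideanSpace.inner_single_left]
  simp only [← Int.cast_smul_eq_zsmul ℝ, inner_add_left, inner_add_right, real_inner_smul_left,
    real_inner_smul_right, h11, h22, h12, h21]
  ring

theorem den_mul_inner_eq_int {σ : ℝ} {r : ℚ} (hr : σ ^ 2 = r) {x y : E2}
    (hx : x ∈ latt {e1, σ • e2}) (hy : y ∈ latt {e1, σ • e2}) :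
    ∃ k : ℤ, r.den * ⟪x, y⟫_ℝ = k := by
  obtain ⟨a, b, rfl⟩ := mem_latt_pair.mp hx
  obtain ⟨a', b', rfl⟩ := mem_latt_pair.mp hy
  refine ⟨r.den * a * a' + b * b' * r.num, ?_⟩
  have : (r.den : ℝ) * r = r.num := by exact_mod_cast Rat.den_mul_eq_num r
  rw [inner_zsmul_e1_add_zsmul_smul_e2, hr]
  push_cast
  linear_combination (b * b' : ℝ) * this

theorem stmt_11_general (σ : ℝ) (hσ2 : ∃ r : ℚ, σ ^ 2 = (r : ℝ))
    (p q : ℤ) (c : E2) (hc : c = p • e1 + q • (σ • e2)) (hc0 : c ≠ 0) :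
    CI (latt {e1, σ • e2}) (reflc c) := by
  obtain ⟨r, hr⟩ := hσ2
  have hcΓ : c ∈ latt {e1, σ • e2} := mem_latt_pair.mpr ⟨p, q, hc.symm⟩
  have hint : ∀ x ∈ latt {e1, σ • e2}, ∃ k : ℤ, r.den * ⟪c, x⟫_ℝ = k :=
    fun x hx => den_mul_inner_eq_int hr hcΓ hx
  obtain ⟨n, hn⟩ := hint c hcΓ
  rw [real_inner_self_eq_norm_sq] at hn
  have hn0 : n ≠ 0 := by
    rw [← Int.cast_ne_zero (α := ℝ), ← hn]
    have := r.den_pos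
    positivity
  exact ci_of_involutive_of_zsmul_mem (latt_fg (Set.toFinite _)) (reflc_involutive hc0) hn0
    fun x hx => zsmul_reflc_mem hcΓ hc0 hint hn hx

theorem stmt_11 (σ : ℝ) (hσ : 0 < σ) (hσ2 : ∃ r : ℚ, σ ^ 2 = (r : ℝ))
    (p q : ℤ) (c : E2) (hc : c = p • e1 + q • (σ • e2)) (hc0 : c ≠ 0) :
    CI (latt {e1, σ • e2}) (reflc c) :=
  stmt_11_general σ hσ2 p q c hc hc0
end
end

section
/- Let σ > 0 with σ² ∈ ℚ, and let T_θ be a rotation with sin θ ≠ 0 that is a coincidence isometry of Γ_□ = ℤe₁ ⊕ ℤ(σe₂). Then tan(θ/2) = (p/q)·(1/σ) for some coprime integers p, q with q ≠ 0. -/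
noncomputable section
open scoped InnerProductSpace

/-! If `Γ ∩ R_θ Γ` has index `n` in `Γ`, then `n e₁ = R_θ y` for some `y = m e₁ + k σ e₂ ∈ Γ`.
Inverting the rotation gives `m = n cos θ` and `k σ = -n sin θ`, so
`tan (θ/2) = (1 - cos θ) / sin θ = (m - n) / (k σ)` with `(m - n) / k` rational. -/

theorem Real.tan_half_eq_one_sub_cos_div_sin {θ : ℝ} (hθ : Real.sin θ ≠ 0) :
    Real.tan (θ / 2) = (1 - Real.cos θ) / Real.sin θ := by
  have hsin : Real.sin θ = 2 * Real.sin (θ / 2) * Real.cos (θ / 2) := by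
    rw [← Real.sin_two_mul, mul_div_cancel₀ θ two_ne_zero]
  have hcos : Real.cos θ = 1 - 2 * Real.sin (θ / 2) ^ 2 := by
    have h := Real.cos_two_mul' (θ / 2)
    rw [mul_div_cancel₀ θ two_ne_zero, Real.cos_sq'] at h
    linarith
  have hcos_half : Real.cos (θ / 2) ≠ 0 := by
    rintro h; simp [hsin, h] at hθ
  have hsin_half : Real.sin (θ / 2) ≠ 0 := by
    rintro h; simp [hsin, h] at hθ
  rw [Real.tan_eq_sin_div_cos, hsin, hcos]
  field_simp
  ring

theorem CI.exists_nsmul_mem {Γ : AddSubgroup E2} {f : E2 →ₗ[ℝ] E2} (hf : CI Γ f) :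
    ∃ n : ℕ, n ≠ 0 ∧ ∀ x ∈ Γ, n • x ∈ imageLat f Γ :=
  ⟨_, hf, fun _ hx => ((Γ ⊓ imageLat f Γ).nsmul_relIndex_mem hx).2⟩

theorem exists_int_coords_of_mem_latt {a b y : E2} (hy : y ∈ latt {a, b}) :
    ∃ m k : ℤ, y = m • a + k • b :=
  (Submodule.mem_span_pair.1 hy).imp fun _ => .imp fun _ h => h.symm

@[simp]
theorem rot_apply_zero (θ : ℝ) (y : E2) :
    rot θ y 0 = Real.cos θ * y 0 - Real.sin θ * y 1 := by
  simp [rot, Matrix.toLpLin_apply, dotProduct, Fin.sum_univ_two]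
  ring

@[simp]
theorem rot_apply_one (θ : ℝ) (y : E2) :
    rot θ y 1 = Real.sin θ * y 0 + Real.cos θ * y 1 := by
  simp [rot, Matrix.toLpLin_apply, dotProduct, Fin.sum_univ_two]

theorem rot_neg_rot (θ : ℝ) (y : E2) : rot (-θ) (rot θ y) = y := by
  ext i
  fin_cases i
  · simp; linear_combination (y 0) * Real.sin_sq_add_cos_sq θ
  · simp; linear_combination (y 1) * Real.sin_sq_add_cos_sq θ

theorem Rat.exists_coprime_cast_eq_div {K : Type*} [Field K] [CharZero K] (t : ℚ) :
    ∃ p q : ℤ, q ≠ 0 ∧ Int.gcd p q = 1 ∧ (t : K) = (p : K) / (q : K) :=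
  ⟨t.num, t.den, by exact_mod_cast t.den_nz, t.reduced, by rw [Rat.cast_def]; norm_cast⟩

theorem Real.tan_half_eq_of_cos_sin {θ σ m k n : ℝ} (hθ : Real.sin θ ≠ 0)
    (hcos : m = n * Real.cos θ) (hsin : k * σ = -(n * Real.sin θ)) (hn : n ≠ 0) :
    Real.tan (θ / 2) = ((m - n) / k) * (1 / σ) := by
  have hkσ : k * σ ≠ 0 := by
    rw [hsin]; simpa [hn] using hθ
  have hk : k ≠ 0 := left_ne_zero_of_mul hkσ
  have hσ : σ ≠ 0 := right_ne_zero_of_mul hkσ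
  rw [Real.tan_half_eq_one_sub_cos_div_sin hθ, div_eq_iff hθ]
  field_simp
  linear_combination (1 - Real.cos θ) * hsin - Real.sin θ * hcos

theorem stmt_14_general (σ : ℝ) (θ : ℝ) (hθ : Real.sin θ ≠ 0)
    (hCI : CI (latt {e1, σ • e2}) (rot θ)) :
    ∃ p q : ℤ, q ≠ 0 ∧ Int.gcd p q = 1 ∧
      Real.tan (θ / 2) = ((p : ℝ) / (q : ℝ)) * (1 / σ) := by
  obtain ⟨n, hn, hmem⟩ := hCI.exists_nsmul_mem
  have he1 : e1 ∈ latt {e1, σ • e2} := Submodule.subset_span (Set.mem_insert _ _)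
  obtain ⟨y, hy, hrot⟩ := hmem e1 he1
  obtain ⟨m, k, rfl⟩ := exists_int_coords_of_mem_latt hy
  have hpre : m • e1 + k • σ • e2 = rot (-θ) (n • e1) := by
    rw [← hrot]; exact (rot_neg_rot θ _).symm
  have hcos : (m : ℝ) = n * Real.cos θ := by
    simpa [e1, e2] using congrArg (· 0) hpre
  have hsin : (k : ℝ) * σ = -(n * Real.sin θ) := by
    simpa [e1, e2] using congrArg (· 1) hpre
  obtain ⟨p, q, hq, hpq, htq⟩ := Rat.exists_coprime_cast_eq_div (K := ℝ) ((m - n) / k)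
  refine ⟨p, q, hq, hpq, ?_⟩
  rw [← htq]
  push_cast
  exact Real.tan_half_eq_of_cos_sin hθ hcos hsin (Nat.cast_ne_zero.2 hn)

theorem stmt_14 (σ : ℝ) (hσ : 0 < σ) (hσ2 : ∃ r : ℚ, σ ^ 2 = (r : ℝ))
    (θ : ℝ) (hθ : Real.sin θ ≠ 0)
    (hCI : CI (latt {e1, σ • e2}) (rot θ)) :
    ∃ p q : ℤ, q ≠ 0 ∧ Int.gcd p q = 1 ∧
      Real.tan (θ / 2) = ((p : ℝ) / (q : ℝ)) * (1 / σ) :=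
  stmt_14_general σ θ hθ hCI
end
end
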